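/- Let a and b be Laurent polynomials over ℂ having symmetry with types ε_a z^{c_a} and ε_b z^{c_b}, and suppose b ≠ 0 and len(a) > len(b). Then there exists a Laurent polynomial q having symmetry with type ε_aε_b z^{c_a−c_b} such that a₁(z) := a(z) − b(z)q(z) has symmetry with type ε_a z^{c_a} and len(a₁) < len(a). -/

import Mathlib

open LaurentPolynomial Matrix
open scoped Classical

noncomputable section

abbrev LP := LaurentPolynomial ℂ

namespace QT

/-- The coefficient of `z^k` in a Laurent polynomial. -/
def coeff (u : LP) (k : ℤ) : ℂ := (AddMonoidAlgebra.coeff u) k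

/-- The Hermitian conjugate `u⋆(z) = Σ conj(u(k)) z^{-k}`. -/
def hstar (u : LP) : LP :=
  AddMonoidAlgebra.ofCoeff (
    Finsupp.mapDomain (fun k => -k)
      (Finsupp.mapRange (starRingEnd ℂ) (map_zero _) (AddMonoidAlgebra.coeff u)))

/-- `u` has symmetry with type `ε z^c`, i.e. `u(k) = ε u(c-k)` for all `k`. -/
def SymT (u : LP) (ε : ℂ) (c : ℤ) : Prop := ∀ k : ℤ, coeff u k = ε * coeff u (c - k)

def Sgn (ε : ℂ) : Prop := ε = 1 ∨ ε = -1

/-- `u` has symmetry (with some type). -/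
def HasSym (u : LP) : Prop := ∃ ε c, Sgn ε ∧ SymT u ε c

/-- The Laurent polynomial `z - a`. -/
def zsub (a : ℂ) : LP := T 1 - LaurentPolynomial.C a

/-- `m` is the multiplicity of `z₀` as a zero of `u`. -/
def mzIs (u : LP) (z₀ : ℂ) (m : ℕ) : Prop := zsub z₀ ^ m ∣ u ∧ ¬ zsub z₀ ^ (m + 1) ∣ u

/-- The multiplicity of `z₀` as a zero of `u`, as a function. -/
def mzF (u : LP) (z₀ : ℂ) : ℕ := sSup {m : ℕ | zsub z₀ ^ m ∣ u}

/-- The difference-of-(Hermitian)-squares property with respect to symmetry type `ε z^c`. -/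
def DOS (u : LP) (ε : ℂ) (c : ℤ) : Prop :=
  ∃ (u₁ u₂ : LP) (ε₁ ε₂ : ℂ) (c₁ c₂ : ℤ),
    Sgn ε₁ ∧ Sgn ε₂ ∧ SymT u₁ ε₁ c₁ ∧ SymT u₂ ε₂ c₂ ∧
    u₁ * hstar u₁ - u₂ * hstar u₂ = u ∧ ε₁ * ε₂ = ε ∧ c₁ - c₂ = c

/-- Degree: the largest exponent with nonzero coefficient (0 for the zero polynomial). -/
def degL (u : LP) : ℤ :=
  if h : u = 0 then 0
  else (AddMonoidAlgebra.coeff u).support.max'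
    (Finsupp.support_nonempty_iff.mpr (fun h' => h (AddMonoidAlgebra.coeff_injective h')))

/-- Lower degree: the smallest exponent with nonzero coefficient (0 for zero). -/
def ldegL (u : LP) : ℤ :=
  if h : u = 0 then 0
  else (AddMonoidAlgebra.coeff u).support.min'
    (Finsupp.support_nonempty_iff.mpr (fun h' => h (AddMonoidAlgebra.coeff_injective h')))

/-- Length `deg - ldeg`, with `len 0 = ⊥`. -/
def lenL (u : LP) : WithBot ℤ := if u = 0 then ⊥ else ((degL u - ldegL u : ℤ) : WithBot ℤ)

/-- `g` is a greatest common divisor of `a` and `b`. -/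
def IsGCD2 (g a b : LP) : Prop := g ∣ a ∧ g ∣ b ∧ ∀ e : LP, e ∣ a → e ∣ b → e ∣ g

/-- `g` is a greatest common divisor of `a`, `b`, `c`, `d`. -/
def IsGCD4 (g a b c d : LP) : Prop :=
  g ∣ a ∧ g ∣ b ∧ g ∣ c ∧ g ∣ d ∧ ∀ e : LP, e ∣ a → e ∣ b → e ∣ c → e ∣ d → e ∣ g

/-- The Hermitian conjugate transpose of a matrix of Laurent polynomials. -/
def hstarM (A : Matrix (Fin 2) (Fin 2) LP) : Matrix (Fin 2) (Fin 2) LP :=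
  fun i j => hstar (A j i)

def IsHerm (A : Matrix (Fin 2) (Fin 2) LP) : Prop := hstarM A = A

/-- `diag(1, -1)`. -/
def Jmat : Matrix (Fin 2) (Fin 2) LP := Matrix.diagonal ![1, -1]

/-- A square matrix of Laurent polynomials is strongly invertible if its determinant is a
nonzero monomial. -/
def StrongInv (A : Matrix (Fin 2) (Fin 2) LP) : Prop :=
  ∃ (lam : ℂ) (k : ℤ), lam ≠ 0 ∧ A.det = LaurentPolynomial.C lam * T k

/-- Compatible symmetry for a `2×2` matrix of Laurent polynomials. -/
def CompatSym (A : Matrix (Fin 2) (Fin 2) LP) : Prop :=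
  ∃ (ε ε' : Fin 2 → ℂ) (c c' : Fin 2 → ℤ),
    (∀ j, Sgn (ε j)) ∧ (∀ k, Sgn (ε' k)) ∧
    ∀ j k, SymT (A j k) (ε j * ε' k) (c' k - c j)

/-- Substitution `z ↦ z²`. -/
def sqDom (u : LP) : LP :=
  AddMonoidAlgebra.ofCoeff (Finsupp.mapDomain (fun k => 2 * k) (AddMonoidAlgebra.coeff u))

/-- Substitution `z ↦ -z`. -/
def negSub (u : LP) : LP :=
  (AddMonoidAlgebra.coeff u).sum fun k c => AddMonoidAlgebra.ofCoeff (Finsupp.single k ((-1 : ℂ) ^ k * c))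

/-- The `γ`-coset `u^{[γ]}(z) = Σ_k u(γ + 2k) z^k`. -/
def cosetL (u : LP) (γ : ℤ) : LP :=
  AddMonoidAlgebra.ofCoeff (
    Finsupp.comapDomain (fun k : ℤ => γ + 2 * k) (AddMonoidAlgebra.coeff u)
      (by intro a _ b _ h; simp only at h; omega))

/-- Evaluation of a Laurent polynomial at a point. -/
def evalL (u : LP) (z : ℂ) : ℂ := (AddMonoidAlgebra.coeff u).sum fun k c => c * z ^ k

/-- `{a; b₁, b₂}_{Θ,(1,-1)}` is a quasi-tight framelet filter bank. -/
def QTFB (a Θ b₁ b₂ : LP) : Prop :=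
  sqDom Θ * hstar a * a + hstar b₁ * b₁ - hstar b₂ * b₂ = Θ ∧
  sqDom Θ * hstar a * negSub a + hstar b₁ * negSub b₁ - hstar b₂ * negSub b₂ = 0

/-- The matrix `N_{a,Θ|n_b}` built from the quotients `A`, `B`. -/
def Nmat (A B : LP) : Matrix (Fin 2) (Fin 2) LP :=
  LaurentPolynomial.C (2 : ℂ)⁻¹ •
    !![cosetL A 0 + cosetL B 0, cosetL A 1 - cosetL B 1;
       T 1 * (cosetL A 1 + cosetL B 1), cosetL A 0 - cosetL B 0]

/-!
Write `A, α` and `B, β` for the degree and lower degree of `a` and `b`; symmetry forces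
`c_a = A + α` and `c_b = B + β`. With `t = a(A) / b(B)`, the two-term
`q = t z^(A-B) + ε_a ε_b t z^(α-β)` has symmetry of type `ε_a ε_b z^(c_a-c_b)`, so `a - b q` has
type `ε_a z^(c_a)`. Since `A - B > α - β`, the exponents of `a - b q` stay at most `A` and its
coefficient at `A` cancels; by symmetry the one at `α` cancels too, so the length drops.
-/

variable {u v : LP} {ε ε' : ℂ} {c c' : ℤ}

lemma Sgn.mul_self (h : Sgn ε) : ε * ε = 1 := by rcases h with rfl | rfl <;> norm_num

lemma coeff_add (u v : LP) (k : ℤ) : coeff (u + v) k = coeff u k + coeff v k := rfl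

lemma coeff_sub (u v : LP) (k : ℤ) : coeff (u - v) k = coeff u k - coeff v k := rfl

lemma coeff_C_mul_T_mul (r : ℂ) (m : ℤ) (u : LP) (k : ℤ) :
    coeff (C r * T m * u) k = r * coeff u (k - m) := by
  rw [← single_eq_C_mul_T, coeff, AddMonoidAlgebra.coeff_single_mul_apply, neg_add_eq_sub]; rfl

lemma coeff_invert (u : LP) (k : ℤ) : coeff (invert u) k = coeff u (-k) := invert_apply u k

lemma symT_iff_eq_C_mul_T_mul_invert : SymT u ε c ↔ u = C ε * T c * invert u := by
  refine ⟨fun h => LaurentPolynomial.ext fun k => ?_, fun h k => ?_⟩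
  · change coeff u k = coeff _ k
    rw [h k, coeff_C_mul_T_mul, coeff_invert, neg_sub]
  · conv_lhs => rw [h]
    rw [coeff_C_mul_T_mul, coeff_invert, neg_sub]

lemma SymT.sub (hu : SymT u ε c) (hv : SymT v ε c) : SymT (u - v) ε c := fun k => by
  rw [coeff_sub, coeff_sub, hu k, hv k, mul_sub]

lemma SymT.mul (hu : SymT u ε c) (hv : SymT v ε' c') : SymT (u * v) (ε * ε') (c + c') := by
  rw [symT_iff_eq_C_mul_T_mul_invert] at *
  conv_lhs => rw [hu, hv]
  rw [map_mul, map_mul, T_add]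
  ring

lemma symT_C_mul_T_add_C_mul_T (hε : ε * ε = 1) (r : ℂ) (m c : ℤ) :
    SymT (C r * T m + C (ε * r) * T (c - m)) ε c := by
  rw [symT_iff_eq_C_mul_T_mul_invert]
  simp only [map_add, map_mul, invert_C, invert_T, neg_sub]
  have hunit : C ε * C ε * (T c * T (-c)) = (1 : LP) := by
    rw [← map_mul, hε, ← T_add, add_neg_cancel, T_zero, map_one, one_mul]
  rw [T_sub, T_sub]
  linear_combination (-(C r * T m)) * hunit

lemma coeff_degL_ne_zero (h : u ≠ 0) : coeff u (degL u) ≠ 0 := by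
  rw [degL, dif_neg h]
  exact Finsupp.mem_support_iff.mp (Finset.max'_mem _ _)

lemma coeff_ldegL_ne_zero (h : u ≠ 0) : coeff u (ldegL u) ≠ 0 := by
  rw [ldegL, dif_neg h]
  exact Finsupp.mem_support_iff.mp (Finset.min'_mem _ _)

lemma le_degL (h : u ≠ 0) {k : ℤ} (hk : coeff u k ≠ 0) : k ≤ degL u := by
  rw [degL, dif_neg h]
  exact Finset.le_max' _ _ (Finsupp.mem_support_iff.mpr hk)

lemma ldegL_le (h : u ≠ 0) {k : ℤ} (hk : coeff u k ≠ 0) : ldegL u ≤ k := by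
  rw [ldegL, dif_neg h]
  exact Finset.min'_le _ _ (Finsupp.mem_support_iff.mpr hk)

lemma coeff_eq_zero_of_degL_lt {k : ℤ} (h : degL u < k) : coeff u k = 0 := by
  by_cases h0 : u = 0
  · subst h0; rfl
  · exact not_imp_comm.mp (le_degL h0) h.not_ge

lemma lenL_of_ne_zero (h : u ≠ 0) : lenL u = ((degL u - ldegL u : ℤ) : WithBot ℤ) := if_neg h

lemma lenL_lt_of_coeff_eq_zero {lo hi : ℤ} (hhi : ∀ k, hi ≤ k → coeff u k = 0)
    (hlo : ∀ k, k ≤ lo → coeff u k = 0) : lenL u < ((hi - lo : ℤ) : WithBot ℤ) := by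
  by_cases h0 : u = 0
  · rw [lenL, if_pos h0]; exact WithBot.bot_lt_coe _
  · have hdeg : degL u < hi := lt_of_not_ge fun h => coeff_degL_ne_zero h0 (hhi _ h)
    have hldeg : lo < ldegL u := lt_of_not_ge fun h => coeff_ldegL_ne_zero h0 (hlo _ h)
    rw [lenL_of_ne_zero h0]
    exact WithBot.coe_lt_coe.mpr (by omega)

lemma SymT.coeff_sub_ne_zero (hu : SymT u ε c) {k : ℤ} (hk : coeff u k ≠ 0) :
    coeff u (c - k) ≠ 0 := fun h => hk (by rw [hu k, h, mul_zero])

lemma SymT.degL_add_ldegL (hu : SymT u ε c) (h0 : u ≠ 0) : degL u + ldegL u = c := by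
  have := ldegL_le h0 (hu.coeff_sub_ne_zero (coeff_degL_ne_zero h0))
  have := le_degL h0 (hu.coeff_sub_ne_zero (coeff_ldegL_ne_zero h0))
  omega

lemma SymT.coeff_eq_zero_of_le (hu : SymT u ε c) {hi : ℤ} (hhi : ∀ k, hi ≤ k → coeff u k = 0)
    {k : ℤ} (hk : k ≤ c - hi) : coeff u k = 0 := by
  rw [hu k, hhi _ (by omega), mul_zero]

lemma coeff_sub_mul_C_mul_T_add_eq_zero {a b : LP} {t s : ℂ} {m n : ℤ} (hnm : n < m)
    (hdeg : degL a = degL b + m) (ht : coeff a (degL a) = t * coeff b (degL b)) {k : ℤ}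
    (hk : degL a ≤ k) : coeff (a - b * (C t * T m + C s * T n)) k = 0 := by
  have hbq : b * (C t * T m + C s * T n) = C t * T m * b + C s * T n * b := by ring
  rw [coeff_sub, hbq, coeff_add, coeff_C_mul_T_mul, coeff_C_mul_T_mul,
    coeff_eq_zero_of_degL_lt (u := b) (k := k - n) (by omega)]
  rcases hk.eq_or_lt with rfl | hk
  · rw [ht, show degL a - m = degL b by omega]; ring
  · rw [coeff_eq_zero_of_degL_lt hk, coeff_eq_zero_of_degL_lt (u := b) (k := k - m) (by omega)]
    ring

/-- one step of length reduction for Laurent polynomials with symmetry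
(Lemma 3.4 of the paper). -/
theorem length_reduction_step
    (a b : LP) (εa εb : ℂ) (ca cb : ℤ) (hεa : Sgn εa) (hεb : Sgn εb)
    (ha : SymT a εa ca) (hb : SymT b εb cb) (hb0 : b ≠ 0) (hlen : lenL b < lenL a) :
    ∃ q : LP, SymT q (εa * εb) (ca - cb) ∧
      SymT (a - b * q) εa ca ∧ lenL (a - b * q) < lenL a := by
  have ha0 : a ≠ 0 := by rintro rfl; exact not_lt_bot hlen
  have hca := ha.degL_add_ldegL ha0
  have hcb := hb.degL_add_ldegL hb0
  have hlen' : degL b - ldegL b < degL a - ldegL a := by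
    rwa [lenL_of_ne_zero ha0, lenL_of_ne_zero hb0, WithBot.coe_lt_coe] at hlen
  set t := coeff a (degL a) / coeff b (degL b)
  set m := degL a - degL b
  set q := C t * T m + C (εa * εb * t) * T (ca - cb - m)
  have hq : SymT q (εa * εb) (ca - cb) := by
    refine symT_C_mul_T_add_C_mul_T ?_ t m (ca - cb)
    rw [mul_mul_mul_comm, hεa.mul_self, hεb.mul_self, one_mul]
  have hd : SymT (a - b * q) εa ca := by
    refine ha.sub ?_
    convert hb.mul hq using 1
    · rw [← mul_assoc, mul_comm εb, mul_assoc, hεb.mul_self, mul_one]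
    · ring
  have htop : ∀ k, degL a ≤ k → coeff (a - b * q) k = 0 := fun k hk =>
    coeff_sub_mul_C_mul_T_add_eq_zero (by omega) (by omega)
      (div_mul_cancel₀ _ (coeff_degL_ne_zero hb0)).symm hk
  refine ⟨q, hq, hd, ?_⟩
  rw [lenL_of_ne_zero ha0]
  exact lenL_lt_of_coeff_eq_zero htop fun k hk => hd.coeff_eq_zero_of_le htop (by omega)

end QT
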